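/- For the domain-wall tensor A_0 = |0⟩(⟨0|+⟨1|), A_1 = |1⟩⟨1| ∈ M_2, the relations A_0² = A_0, A_1² = A_1, A_1 A_0 = 0 hold, and for n ≥ 2: S_n(A) = Span{ |0⟩^{⊗n}, |1⟩^{⊗n}, |DW_n⟩ }, where |DW_n⟩ = Σ_{ℓ=1}^{n−1} |0⟩^{⊗ℓ} ⊗ |1⟩^{⊗(n−ℓ)}. -/

import Mathlib

open scoped BigOperators

noncomputable section

def prodA {d D : ℕ} (A : Fin d → Matrix (Fin D) (Fin D) ℂ) {k : ℕ} (s : Fin k → Fin d) :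
    Matrix (Fin D) (Fin D) ℂ :=
  (List.ofFn fun t => A (s t)).prod

def mpsVec {d D : ℕ} (A : Fin d → Matrix (Fin D) (Fin D) ℂ) (X : Matrix (Fin D) (Fin D) ℂ)
    (k : ℕ) : (Fin k → Fin d) → ℂ :=
  fun s => (X * prodA A s).trace

/-- The physical MPS subspace S_k(A). -/
def mpsSpace {d D : ℕ} (A : Fin d → Matrix (Fin D) (Fin D) ℂ) (k : ℕ) :
    Submodule ℂ ((Fin k → Fin d) → ℂ) :=
  Submodule.span ℂ (Set.range fun X => mpsVec A X k)

/-- The computational basis state |s⟩, as a coefficient vector. -/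
def basisState {d k : ℕ} (s : Fin k → Fin d) : (Fin k → Fin d) → ℂ :=
  fun t => if t = s then 1 else 0

/-- The domain-wall superposition |DW_n⟩ = ∑_{ℓ=1}^{n−1} |0⟩^{⊗ℓ} ⊗ |1⟩^{⊗(n−ℓ)}. -/
def DWstate (n : ℕ) : (Fin n → Fin 2) → ℂ :=
  ∑ l ∈ Finset.Ico 1 n, basisState (fun t : Fin n => if (t : ℕ) < l then 0 else 1)

/-!
Write `A_a = [i = a ∧ a ≤ j]`. Since `[i = a ∧ b ≤ j] · [i = b' ∧ c ≤ j] = [b ≤ b'] · [i = a ∧ c ≤ j]`,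
the product `A_{s₁} ⋯ A_{sₙ}` vanishes unless the word `s` is monotone, i.e. `s = 0^ℓ 1^(n-ℓ)`, and
is then `[i = s₁ ∧ sₙ ≤ j]`. Hence `Tr(X A_s)` is `X₁₁`, `X₀₀ + X₁₀` or `X₁₀` according as `ℓ = 0`,
`ℓ = n` or `0 < ℓ < n`: the MPS vector of `X` is `(X₀₀ + X₁₀)|0ⁿ⟩ + X₁₁|1ⁿ⟩ + X₁₀|DWₙ⟩`, whose
three coefficients can be chosen freely.
-/

namespace DomainWall

variable {d : ℕ}

def rowFrom (a c : Fin d) : Matrix (Fin d) (Fin d) ℂ :=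
  Matrix.of fun i j => if i = a ∧ c ≤ j then 1 else 0

/-- For `d = 2` this is `A₀ = !![1, 1; 0, 0]`, `A₁ = !![0, 0; 0, 1]`. -/
def domainWallTensor (d : ℕ) (a : Fin d) : Matrix (Fin d) (Fin d) ℂ := rowFrom a a

lemma rowFrom_mul_rowFrom (a b b' c : Fin d) :
    rowFrom a b * rowFrom b' c = if b ≤ b' then rowFrom a c else 0 := by
  ext i j
  split_ifs with h <;> by_cases hi : i = a <;> by_cases hj : c ≤ j <;>
    simp [rowFrom, Matrix.mul_apply, hi, hj, h]

lemma trace_mul_rowFrom (X : Matrix (Fin d) (Fin d) ℂ) (a c : Fin d) :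
    (X * rowFrom a c).trace = ∑ j with c ≤ j, X j a := by
  simp only [rowFrom, Matrix.trace, Matrix.diag, Matrix.mul_apply, Matrix.of_apply, mul_ite,
    mul_one, mul_zero, Finset.sum_filter]
  rw [Finset.sum_comm]
  simp [ite_and]

lemma monotone_iff_le_one_and_tail {α : Type*} [Preorder α] {k : ℕ} (s : Fin (k + 2) → α) :
    Monotone s ↔ s 0 ≤ s 1 ∧ Monotone (Fin.tail s) := by
  simp only [Fin.monotone_iff_le_succ, Fin.forall_fin_succ, Fin.tail, Fin.succ_castSucc]
  rfl

lemma prodA_cons {D : ℕ} (A : Fin d → Matrix (Fin D) (Fin D) ℂ) {k : ℕ} (s : Fin (k + 1) → Fin d) :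
    prodA A s = A (s 0) * prodA A (Fin.tail s) := by
  simp [prodA, List.ofFn_succ, Fin.tail]

lemma prodA_domainWallTensor {k : ℕ} (s : Fin (k + 1) → Fin d) :
    prodA (domainWallTensor d) s = if Monotone s then rowFrom (s 0) (s (Fin.last k)) else 0 := by
  induction k with
  | zero =>
    have hmono : Monotone s := fun i j _ => by rw [Subsingleton.elim (α := Fin 1) i j]
    simp [prodA, domainWallTensor, hmono, Fin.last]
  | succ k ih =>
    rw [prodA_cons, ih]
    simp only [monotone_iff_le_one_and_tail s]
    by_cases hmono : Monotone (Fin.tail s)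
    · simp [domainWallTensor, hmono, rowFrom_mul_rowFrom, Fin.tail]
    · simp [hmono]

lemma domainWallTensor_mul_self (a : Fin d) :
    domainWallTensor d a * domainWallTensor d a = domainWallTensor d a := by
  simp [domainWallTensor, rowFrom_mul_rowFrom]

lemma domainWallTensor_mul_of_lt {a b : Fin d} (h : b < a) :
    domainWallTensor d a * domainWallTensor d b = 0 := by
  simp [domainWallTensor, rowFrom_mul_rowFrom, h.not_ge]

/-- `DWstate n` is the sum of the `basisState (wall n l)` with `0 < l < n`. -/
def wall (n l : ℕ) : Fin n → Fin 2 := fun t => if (t : ℕ) < l then 0 else 1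

variable {n : ℕ}

lemma wall_monotone (l : ℕ) : Monotone (wall n l) := by
  intro t u htu
  simp only [wall]
  split_ifs <;> first | exact le_rfl | exact Fin.zero_le _ | omega

lemma wall_zero : wall n 0 = fun _ => 1 := by
  funext t; simp [wall]

lemma wall_self : wall n n = fun _ => 0 := by
  funext t; simp [wall]

lemma wall_inj {l m : ℕ} (hl : l ≤ n) (hm : m ≤ n) : wall n l = wall n m ↔ l = m := by
  refine ⟨fun h => ?_, fun h => h ▸ rfl⟩
  by_contra hne
  wlog hlt : l < m generalizing l m
  · exact this hm hl h.symm (Ne.symm hne) (by omega)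
  simpa [wall, hlt] using congrFun h ⟨l, by omega⟩

lemma exists_wall_of_monotone {s : Fin n → Fin 2} (hs : Monotone s) : ∃ l ≤ n, s = wall n l := by
  have hex : ∃ l : ℕ, ∀ t : Fin n, l ≤ t → s t = 1 := ⟨n, fun t ht => by omega⟩
  refine ⟨Nat.find hex, Nat.find_min' hex fun t ht => by omega, funext fun t => ?_⟩
  by_cases ht : (t : ℕ) < Nat.find hex
  · rw [wall, if_pos ht]
    by_contra h0
    refine Nat.find_min hex ht fun u hu => ?_
    have : 1 ≤ s u := (Fin.one_le_of_ne_zero h0).trans (hs (Fin.le_iff_val_le_val.2 hu))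
    omega
  · simpa [wall, ht] using Nat.find_spec hex t (by omega)

lemma basisState_wall {l m : ℕ} (hl : l ≤ n) (hm : m ≤ n) :
    basisState (wall n m) (wall n l) = if l = m then 1 else 0 := by
  simp only [basisState, wall_inj hl hm]

lemma DWstate_wall {l : ℕ} (hl : l ≤ n) :
    DWstate n (wall n l) = if 0 < l ∧ l < n then 1 else 0 := by
  have hsum : DWstate n = ∑ m ∈ Finset.Ico 1 n, basisState (wall n m) := rfl
  rw [hsum, Finset.sum_apply, Finset.sum_congr rfl fun m hm =>
    basisState_wall hl (Finset.mem_Ico.1 hm).2.le, Finset.sum_ite_eq]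
  simp only [Finset.mem_Ico, Nat.one_le_iff_ne_zero, Nat.pos_iff_ne_zero]

lemma basisState_of_not_monotone {s t : Fin n → Fin 2} (ht : Monotone t) (hs : ¬ Monotone s) :
    basisState t s = 0 :=
  if_neg fun h : s = t => hs (h ▸ ht)

lemma DWstate_of_not_monotone {s : Fin n → Fin 2} (hs : ¬ Monotone s) : DWstate n s = 0 := by
  simp only [DWstate, Finset.sum_apply]
  exact Finset.sum_eq_zero fun l _ => basisState_of_not_monotone (wall_monotone l) hs

lemma mpsVec_domainWallTensor_wall (X : Matrix (Fin 2) (Fin 2) ℂ) {k l : ℕ} (hl : l ≤ k + 1) :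
    mpsVec (domainWallTensor 2) X (k + 1) (wall (k + 1) l) =
      if l = 0 then X 1 1 else if l = k + 1 then X 0 0 + X 1 0 else X 1 0 := by
  simp only [mpsVec, prodA_domainWallTensor, if_pos (wall_monotone l), trace_mul_rowFrom]
  rcases Nat.eq_zero_or_pos l with rfl | hl0
  · simp [wall, Finset.sum_filter, Fin.sum_univ_two]
  rcases hl.eq_or_lt with rfl | hlk
  · simp [wall, Fin.sum_univ_two]
  · have hkl : ¬ k < l := by omega
    simp [wall, Finset.sum_filter, Fin.sum_univ_two, hl0, hkl, hl0.ne', hlk.ne]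

lemma mpsVec_domainWallTensor (X : Matrix (Fin 2) (Fin 2) ℂ) (k : ℕ) :
    mpsVec (domainWallTensor 2) X (k + 1) =
      (X 0 0 + X 1 0) • basisState (fun _ => 0) + X 1 1 • basisState (fun _ => 1)
        + X 1 0 • DWstate (k + 1) := by
  rw [← wall_self, ← wall_zero]
  funext s
  simp only [Pi.add_apply, Pi.smul_apply, smul_eq_mul]
  by_cases hs : Monotone s
  · obtain ⟨l, hl, rfl⟩ := exists_wall_of_monotone hs
    rw [mpsVec_domainWallTensor_wall X hl, basisState_wall hl le_rfl,
      basisState_wall hl (Nat.zero_le _), DWstate_wall hl]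
    rcases Nat.eq_zero_or_pos l with rfl | hl0
    · simp
    rcases hl.eq_or_lt with rfl | hlk
    · simp
    · simp [hl0, hlk, hl0.ne', hlk.ne]
  · simp [mpsVec, prodA_domainWallTensor, hs, DWstate_of_not_monotone,
      basisState_of_not_monotone (wall_monotone _) hs]

lemma mpsSpace_domainWallTensor (k : ℕ) :
    mpsSpace (domainWallTensor 2) (k + 1) = Submodule.span ℂ
      {basisState (fun _ => 0), basisState (fun _ => 1), DWstate (k + 1)} := by
  have hmem (X : Matrix (Fin 2) (Fin 2) ℂ) :
      mpsVec (domainWallTensor 2) X (k + 1) ∈ mpsSpace (domainWallTensor 2) (k + 1) :=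
    Submodule.subset_span ⟨X, rfl⟩
  refine le_antisymm (Submodule.span_le.2 ?_) (Submodule.span_le.2 ?_)
  · rintro _ ⟨X, rfl⟩
    exact Submodule.mem_span_triple.2 ⟨_, _, _, (mpsVec_domainWallTensor X k).symm⟩
  · simp only [Set.insert_subset_iff, Set.singleton_subset_iff, SetLike.mem_coe]
    refine ⟨?_, ?_, ?_⟩
    · simpa [mpsVec_domainWallTensor] using hmem !![1, 0; 0, 0]
    · simpa [mpsVec_domainWallTensor] using hmem !![0, 0; 0, 1]
    · simpa [mpsVec_domainWallTensor] using sub_mem (hmem !![0, 0; 1, 0]) (hmem !![1, 0; 0, 0])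

end DomainWall

open DomainWall in
/-- for the domain-wall tensor, A₀² = A₀, A₁² = A₁, A₁A₀ = 0, and
S_n(A) = Span{|0⟩^{⊗n}, |1⟩^{⊗n}, |DW_n⟩} for n ≥ 2. -/
theorem domainWall_mpsSpace (A : Fin 2 → Matrix (Fin 2) (Fin 2) ℂ)
    (hA0 : A 0 = !![1, 1; 0, 0]) (hA1 : A 1 = !![0, 0; 0, 1]) :
    A 0 * A 0 = A 0 ∧ A 1 * A 1 = A 1 ∧ A 1 * A 0 = 0 ∧
    ∀ n, 2 ≤ n →
      mpsSpace A n = Submodule.span ℂ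
        {basisState (fun _ : Fin n => 0), basisState (fun _ : Fin n => 1), DWstate n} := by
  have hA : A = domainWallTensor 2 := by
    funext a
    fin_cases a <;> ext i j <;> fin_cases i <;> fin_cases j <;>
      simp [hA0, hA1, domainWallTensor, rowFrom]
  subst hA
  refine ⟨domainWallTensor_mul_self 0, domainWallTensor_mul_self 1,
    domainWallTensor_mul_of_lt Fin.zero_lt_one, fun n hn => ?_⟩
  obtain ⟨k, rfl⟩ : ∃ k, n = k + 1 := ⟨n - 1, by omega⟩
  exact mpsSpace_domainWallTensor k
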